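/- arXiv:1507.00789 — 5 statements merged into one kernel-verified Lean document; each statement's English description precedes it below -/
import Mathlib

section
/- Let R be an N_e × N_e complex Hermitian positive semidefinite matrix with largest eigenvalue λ_max and unit-norm eigenvector u_e for λ_max, let τ, N_e be positive integers, let ω ∈ ℂ^τ satisfy ‖ω‖² = τ, and let W be the N_e × τ matrix each of whose rows equals ω^T. Then for every N_e × N_e complex matrix P with tr(P W W^H P^H) ≤ N_e τ, one has Σ_{r=1}^{N_e} Σ_{s=1}^{N_e} (P^H R P)_{rs} ≤ N_e · λ_max. Moreover, any matrix P whose columns sum to √N_e · u_e (for instance the matrix all of whose columns equal (1/√N_e) u_e) satisfies the constraint with equality and attains the value N_e · λ_max. -/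
open Matrix
open scoped ComplexOrder

/-!
Both quantities depend on `P` only through its vector of row sums `x = P *ᵥ 1`: the sum of the
entries of `Pᴴ R P` is `xᴴ R x`, and since every row of `W` is `ω`, `P W = x ωᵀ`, so
`tr (P W Wᴴ Pᴴ) = ‖ω‖² ‖x‖² = τ ‖x‖²`. The power constraint thus reads `‖x‖² ≤ N_e`, and the
Rayleigh bound `xᴴ R x ≤ λ_max ‖x‖²` (i.e. `R ≤ λ_max • 1` in the Loewner order) gives the
inequality; `x = √N_e u_e` attains it.
-/

namespace Matrix
variable {m n α : Type*} [Fintype m] [Fintype n]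

theorem sum_sum_eq_one_dotProduct_mulVec_one [NonAssocSemiring α] (M : Matrix m n α) :
    ∑ r, ∑ s, M r s = 1 ⬝ᵥ M *ᵥ 1 := by
  simp [mulVec, dotProduct]

theorem sum_sum_conjTranspose_mul_mul [Semiring α] [StarRing α] (P : Matrix m n α)
    (R : Matrix m m α) : ∑ r, ∑ s, (Pᴴ * R * P) r s = star (P *ᵥ 1) ⬝ᵥ R *ᵥ P *ᵥ 1 := by
  rw [sum_sum_eq_one_dotProduct_mulVec_one, star_mulVec, star_one, ← mulVec_mulVec,
    ← mulVec_mulVec, dotProduct_mulVec]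

theorem trace_vecMulVec_mul_conjTranspose [CommSemiring α] [StarRing α] (x : m → α) (y : n → α) :
    trace (vecMulVec x y * (vecMulVec x y)ᴴ) = (star y ⬝ᵥ y) * (star x ⬝ᵥ x) := by
  rw [conjTranspose_vecMulVec, vecMulVec_mul_vecMulVec, trace_vecMulVec, dotProduct_smul,
    smul_eq_mul, dotProduct_comm y, dotProduct_comm x]

open scoped MatrixOrder in
theorem IsHermitian.dotProduct_mulVec_le {𝕜 : Type*} [RCLike 𝕜] [DecidableEq n]
    {A : Matrix n n 𝕜} (hA : A.IsHermitian) {c : ℝ} (h : ∀ i, hA.eigenvalues i ≤ c) (x : n → 𝕜) :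
    star x ⬝ᵥ A *ᵥ x ≤ c * (star x ⬝ᵥ x) := by
  have hle : A ≤ algebraMap ℝ (Matrix n n 𝕜) c := by
    refine le_algebraMap_of_spectrum_le (fun r hr => ?_) hA
    obtain ⟨i, rfl⟩ := hA.spectrum_real_eq_range_eigenvalues ▸ hr
    exact h i
  have := (le_iff.mp hle).dotProduct_mulVec_nonneg x
  rwa [Algebra.algebraMap_eq_smul_one, sub_mulVec, smul_mulVec, one_mulVec, dotProduct_sub,
    dotProduct_smul, sub_nonneg, RCLike.real_smul_eq_coe_mul] at this

end Matrix

theorem Complex.star_dotProduct_self {ι : Type*} [Fintype ι] (v : ι → ℂ) :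
    star v ⬝ᵥ v = ((∑ i, Complex.normSq (v i) : ℝ) : ℂ) := by
  simp [dotProduct, Complex.normSq_eq_conj_mul_self]

theorem stmt_2_general {Ne τ : ℕ} (hτ : 0 < τ)
    (R : Matrix (Fin Ne) (Fin Ne) ℂ) (hR : R.PosSemidef)
    (lmax : ℝ)
    (hmax : ∀ i, hR.1.eigenvalues i ≤ lmax)
    (u : Fin Ne → ℂ) (hu : star u ⬝ᵥ u = 1)
    (heig : R *ᵥ u = (lmax : ℂ) • u)
    (ω : Fin τ → ℂ) (hω : (∑ t, Complex.normSq (ω t)) = (τ : ℝ))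
    (W : Matrix (Fin Ne) (Fin τ) ℂ) (hW : ∀ r, W r = ω) :
    (∀ P : Matrix (Fin Ne) (Fin Ne) ℂ,
       (Matrix.trace (P * W * Wᴴ * Pᴴ)).re ≤ (Ne : ℝ) * τ →
       (∑ r, ∑ s, (Pᴴ * R * P) r s).re ≤ (Ne : ℝ) * lmax) ∧
    (∀ P : Matrix (Fin Ne) (Fin Ne) ℂ,
       (fun r => ∑ s, P r s) = ((Real.sqrt Ne : ℝ) : ℂ) • u →
       Matrix.trace (P * W * Wᴴ * Pᴴ) = (((Ne : ℝ) * τ : ℝ) : ℂ) ∧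
       (∑ r, ∑ s, (Pᴴ * R * P) r s) = (((Ne : ℝ) * lmax : ℝ) : ℂ)) := by
  have htrace (P : Matrix (Fin Ne) (Fin Ne) ℂ) :
      trace (P * W * Wᴴ * Pᴴ) = (τ : ℝ) * (star (P *ᵥ 1) ⬝ᵥ P *ᵥ 1) := by
    have hW1 : W = vecMulVec 1 ω := by ext r t; simp [hW, vecMulVec_apply]
    rw [Matrix.mul_assoc (P * W), ← conjTranspose_mul, hW1, mul_vecMulVec,
      trace_vecMulVec_mul_conjTranspose, Complex.star_dotProduct_self, hω]
  have hlmax : 0 ≤ lmax := by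
    have := hR.dotProduct_mulVec_nonneg u
    rwa [heig, dotProduct_smul, hu, smul_eq_mul, mul_one, Complex.zero_le_real] at this
  refine ⟨fun P hP => ?_, fun P hP => ?_⟩
  · set x := P *ᵥ 1
    have hx : (star x ⬝ᵥ x).re ≤ Ne := by
      rw [htrace, Complex.re_ofReal_mul] at hP
      exact le_of_mul_le_mul_left (by linarith) (Nat.cast_pos.mpr hτ : (0 : ℝ) < τ)
    rw [sum_sum_conjTranspose_mul_mul]
    calc (star x ⬝ᵥ R *ᵥ x).re ≤ lmax * (star x ⬝ᵥ x).re := by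
          simpa using (Complex.le_def.1 (hR.1.dotProduct_mulVec_le hmax x)).1
      _ ≤ Ne * lmax := by nlinarith
  · have hrowSum : (fun r => ∑ s, P r s) = P *ᵥ 1 := by ext; simp [mulVec, dotProduct]
    rw [hrowSum] at hP
    have hNe : ((Real.sqrt Ne : ℝ) : ℂ) * (Real.sqrt Ne : ℝ) = Ne := by
      rw [← Complex.ofReal_mul, Real.mul_self_sqrt (Nat.cast_nonneg _), Complex.ofReal_natCast]
    rw [htrace, sum_sum_conjTranspose_mul_mul, hP]
    simp only [star_smul, mulVec_smul, heig, smul_dotProduct, dotProduct_smul, hu, smul_eq_mul,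
      mul_one, Complex.star_def, Complex.conj_ofReal]
    push_cast
    exact ⟨by linear_combination (τ : ℂ) * hNe, by linear_combination (lmax : ℂ) * hNe⟩

/-- Theorem 1 of the paper: any pilot-contamination precoder `P` satisfying the power
constraint `tr(P W Wᴴ Pᴴ) ≤ N_e τ` yields `∑_{r,s} (Pᴴ R P)_{rs} ≤ N_e λ_max`, and any
`P` whose columns sum to `√N_e u_e` satisfies the constraint with equality and attains
the value `N_e λ_max`. -/
theorem stmt_2 {Ne τ : ℕ} (hNe : 0 < Ne) (hτ : 0 < τ)
    (R : Matrix (Fin Ne) (Fin Ne) ℂ) (hR : R.PosSemidef)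
    (lmax : ℝ)
    (hmem : ∃ i, hR.1.eigenvalues i = lmax)
    (hmax : ∀ i, hR.1.eigenvalues i ≤ lmax)
    (u : Fin Ne → ℂ) (hu : star u ⬝ᵥ u = 1)
    (heig : R *ᵥ u = (lmax : ℂ) • u)
    (ω : Fin τ → ℂ) (hω : (∑ t, Complex.normSq (ω t)) = (τ : ℝ))
    (W : Matrix (Fin Ne) (Fin τ) ℂ) (hW : ∀ r, W r = ω) :
    (∀ P : Matrix (Fin Ne) (Fin Ne) ℂ,
       (Matrix.trace (P * W * Wᴴ * Pᴴ)).re ≤ (Ne : ℝ) * τ →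
       (∑ r, ∑ s, (Pᴴ * R * P) r s).re ≤ (Ne : ℝ) * lmax) ∧
    (∀ P : Matrix (Fin Ne) (Fin Ne) ℂ,
       (fun r => ∑ s, P r s) = ((Real.sqrt Ne : ℝ) : ℂ) • u →
       Matrix.trace (P * W * Wᴴ * Pᴴ) = (((Ne : ℝ) * τ : ℝ) : ℂ) ∧
       (∑ r, ∑ s, (Pᴴ * R * P) r s) = (((Ne : ℝ) * lmax : ℝ) : ℂ)) :=
  stmt_2_general hτ R hR lmax hmax u hu heig ω hω W hW
end

section
/- Let θ_m ≥ 0, θ_bp > 0 and θ̃_e > 0 be real numbers such that D := θ_bp² θ̃_e² + (θ_bp + θ_m)(θ_m − θ̃_e) θ_bp θ̃_e ≥ 0, and set γ_th = (−θ_bp θ̃_e + √D) / ((θ_bp + θ_m) θ_bp θ̃_e). Then the function f(γ) = (γθ_bp + γθ_m + 1) / ((γθ_bp + 1)(γθ̃_e + 1)) is strictly decreasing on the interval (max(γ_th, 0), ∞). -/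
/-!
Write `f γ = (a γ + 1) / ((b γ + 1) (c γ + 1))` with `a = θ_bp + θ_m`, `b = θ_bp`, `c = θ̃_e`.
After clearing the (positive) denominators, `f x - f y` becomes `(y - x) Q(x, y)` with
`Q(x, y) = abc xy + bc (x + y) + b + c - a`, and completing the square gives
`abc Q(x, y) = (abc x + bc) (abc y + bc) - D`. Beyond `γ_th` both factors exceed `√D`,
so their product exceeds `D` and `Q > 0`.
-/

open Set

lemma cross_mul_sub_cross_mul_eq (a b c x y : ℝ) :
    (a * x + 1) * ((b * y + 1) * (c * y + 1)) - (a * y + 1) * ((b * x + 1) * (c * x + 1)) =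
      (y - x) * (a * b * c * x * y + b * c * (x + y) + b + c - a) := by
  ring

lemma strictAntiOn_ratio_of_pos {a b c : ℝ} {s : Set ℝ} (hb : 0 ≤ b) (hc : 0 ≤ c)
    (hs : s ⊆ Ioi 0)
    (hQ : ∀ x ∈ s, ∀ y ∈ s, 0 < a * b * c * x * y + b * c * (x + y) + b + c - a) :
    StrictAntiOn (fun γ : ℝ => (a * γ + 1) / ((b * γ + 1) * (c * γ + 1))) s := by
  intro x hx y hy hxy
  have hx0 : 0 < x := hs hx
  have hy0 : 0 < y := hs hy
  have hdx : 0 < (b * x + 1) * (c * x + 1) := by positivity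
  have hdy : 0 < (b * y + 1) * (c * y + 1) := by positivity
  rw [div_lt_div_iff₀ hdy hdx, ← sub_pos, cross_mul_sub_cross_mul_eq]
  exact mul_pos (sub_pos.2 hxy) (hQ x hx y hy)

lemma lt_mul_of_sqrt_lt {D u v : ℝ} (hu : √D < u) (hv : √D < v) : D < u * v := by
  rcases le_or_gt 0 D with hD | hD
  · calc D = √D * √D := (Real.mul_self_sqrt hD).symm
      _ < u * v := mul_lt_mul'' hu hv (Real.sqrt_nonneg D) (Real.sqrt_nonneg D)
  · exact hD.trans (mul_pos ((Real.sqrt_nonneg D).trans_lt hu) ((Real.sqrt_nonneg D).trans_lt hv))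

lemma sqrt_lt_of_div_lt {p q D x : ℝ} (hp : 0 < p) (hx : (-q + √D) / p < x) :
    √D < p * x + q := by
  rw [div_lt_iff₀ hp] at hx
  linarith

theorem strictAntiOn_ratio {a b c D : ℝ} (ha : 0 < a) (hb : 0 < b) (hc : 0 < c)
    (hD : D = b ^ 2 * c ^ 2 + a * (a - b - c) * b * c) :
    StrictAntiOn (fun γ : ℝ => (a * γ + 1) / ((b * γ + 1) * (c * γ + 1)))
      (Ioi (max ((-(b * c) + √D) / (a * b * c)) 0)) := by
  have hp : 0 < a * b * c := by positivity
  refine strictAntiOn_ratio_of_pos hb.le hc.le (Ioi_subset_Ioi (le_max_right _ _)) ?_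
  intro x hx y hy
  have hD_lt := lt_mul_of_sqrt_lt
    (sqrt_lt_of_div_lt hp ((le_max_left _ _).trans_lt (mem_Ioi.1 hx)))
    (sqrt_lt_of_div_lt hp ((le_max_left _ _).trans_lt (mem_Ioi.1 hy)))
  have hsquare : a * b * c * (a * b * c * x * y + b * c * (x + y) + b + c - a) =
      (a * b * c * x + b * c) * (a * b * c * y + b * c) - D := by
    rw [hD]; ring
  exact pos_of_mul_pos_right (hsquare ▸ sub_pos.2 hD_lt) hp.le

theorem stmt_4_general (θm θbp θe : ℝ) (hθm : 0 ≤ θm) (hθbp : 0 < θbp) (hθe : 0 < θe) :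
    StrictAntiOn
      (fun γ : ℝ => (γ * θbp + γ * θm + 1) / ((γ * θbp + 1) * (γ * θe + 1)))
      (Set.Ioi
        (max ((-(θbp * θe) +
            Real.sqrt (θbp ^ 2 * θe ^ 2 + (θbp + θm) * (θm - θe) * θbp * θe))
          / ((θbp + θm) * θbp * θe)) 0)) := by
  convert strictAntiOn_ratio (a := θbp + θm) (by positivity) hθbp hθe
    (D := θbp ^ 2 * θe ^ 2 + (θbp + θm) * (θm - θe) * θbp * θe) (by ring) using 2 with γ
  ring

/-- Theorem 3 of the paper: without artificial noise, the ratio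
`f(γ) = (γθ_bp + γθ_m + 1)/((γθ_bp + 1)(γθ̃_e + 1))` is strictly decreasing for
`γ > max(γ_th, 0)`. -/
theorem stmt_4 (θm θbp θe : ℝ) (hθm : 0 ≤ θm) (hθbp : 0 < θbp) (hθe : 0 < θe)
    (hD : 0 ≤ θbp ^ 2 * θe ^ 2 + (θbp + θm) * (θm - θe) * θbp * θe) :
    StrictAntiOn
      (fun γ : ℝ => (γ * θbp + γ * θm + 1) / ((γ * θbp + 1) * (γ * θe + 1)))
      (Set.Ioi
        (max ((-(θbp * θe) +
            Real.sqrt (θbp ^ 2 * θe ^ 2 + (θbp + θm) * (θm - θe) * θbp * θe))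
          / ((θbp + θm) * θbp * θe)) 0)) :=
  stmt_4_general θm θbp θe hθm hθbp hθe
end

section
/- Let N0 > 0 be a real number, and let A, B be n × n complex Hermitian positive semidefinite matrices with A·B = 0. Then the matrices N0·I + A and N0·I + A + B are invertible, and for every n × n complex matrix R with R·B = 0 one has R (N0·I + A + B)^{-1} = R (N0·I + A)^{-1}. -/
open Matrix
open scoped ComplexOrder

/-!
Because `A * B = 0`, the matrix `M = N0 • 1 + A` acts on the columns of `B` as the scalar `N0`,
so `M⁻¹ * B = N0⁻¹ • B` and hence `R * M⁻¹ * B = N0⁻¹ • (R * B) = 0`. Then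
`R * M⁻¹ * (M + B) = R`, i.e. `R * (M + B)⁻¹ = R * M⁻¹`. Invertibility comes from
`M` and `M + B` being positive definite.
-/

namespace Matrix

variable {n K : Type*} [Fintype n] [DecidableEq n]

theorem mul_inv_add_eq_mul_inv_of_mul_inv_mul_eq_zero [CommRing K] {M B R : Matrix n n K}
    (hM : IsUnit M) (hMB : IsUnit (M + B)) (h : R * M⁻¹ * B = 0) :
    R * (M + B)⁻¹ = R * M⁻¹ := by
  have hR : R * M⁻¹ * (M + B) = R := by
    rw [Matrix.mul_add, h, add_zero,
      nonsing_inv_mul_cancel_right _ _ ((isUnit_iff_isUnit_det M).mp hM)]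
  calc R * (M + B)⁻¹ = R * M⁻¹ * (M + B) * (M + B)⁻¹ := by rw [hR]
    _ = R * M⁻¹ := mul_nonsing_inv_cancel_right _ _ ((isUnit_iff_isUnit_det _).mp hMB)

theorem inv_mul_eq_inv_smul_of_mul_eq_smul [Field K] {M B : Matrix n n K} {c : K}
    (hM : IsUnit M) (hc : c ≠ 0) (h : M * B = c • B) : M⁻¹ * B = c⁻¹ • B := by
  calc M⁻¹ * B = M⁻¹ * (M * (c⁻¹ • B)) := by
        rw [Matrix.mul_smul, h, smul_smul, inv_mul_cancel₀ hc, one_smul]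
    _ = c⁻¹ • B := nonsing_inv_mul_cancel_left _ _ ((isUnit_iff_isUnit_det M).mp hM)

theorem smul_one_add_mul_of_mul_eq_zero [CommRing K] {A B : Matrix n n K} (c : K)
    (h : A * B = 0) : (c • (1 : Matrix n n K) + A) * B = c • B := by
  rw [Matrix.add_mul, h, add_zero, Matrix.smul_mul, Matrix.one_mul]

end Matrix

/-- Key matrix-algebra step (Eq. (82)) of Theorem 3 of the paper: if `A B = 0` for
Hermitian PSD `A`, `B` and `N0 > 0`, then `N0 I + A` and `N0 I + A + B` are invertible
and `R (N0 I + A + B)⁻¹ = R (N0 I + A)⁻¹` for every `R` with `R B = 0`. -/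
theorem stmt_13 {n : ℕ} (N0 : ℝ) (hN0 : 0 < N0)
    (A B : Matrix (Fin n) (Fin n) ℂ) (hA : A.PosSemidef) (hB : B.PosSemidef)
    (hAB : A * B = 0) :
    IsUnit ((N0 : ℂ) • (1 : Matrix (Fin n) (Fin n) ℂ) + A) ∧
    IsUnit ((N0 : ℂ) • (1 : Matrix (Fin n) (Fin n) ℂ) + A + B) ∧
    ∀ R : Matrix (Fin n) (Fin n) ℂ, R * B = 0 →
      R * ((N0 : ℂ) • (1 : Matrix (Fin n) (Fin n) ℂ) + A + B)⁻¹
        = R * ((N0 : ℂ) • (1 : Matrix (Fin n) (Fin n) ℂ) + A)⁻¹ := by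
  have hM : ((N0 : ℂ) • (1 : Matrix (Fin n) (Fin n) ℂ) + A).PosDef :=
    (PosDef.one.smul (by exact_mod_cast hN0 : (0 : ℂ) < N0)).add_posSemidef hA
  have hMB := hM.add_posSemidef hB
  refine ⟨hM.isUnit, hMB.isUnit, fun R hRB => ?_⟩
  have hM_inv_B := inv_mul_eq_inv_smul_of_mul_eq_smul hM.isUnit
    (by exact_mod_cast hN0.ne') (smul_one_add_mul_of_mul_eq_zero _ hAB)
  refine mul_inv_add_eq_mul_inv_of_mul_inv_mul_eq_zero hM.isUnit hMB.isUnit ?_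
  rw [Matrix.mul_assoc, hM_inv_B, Matrix.mul_smul, hRB, smul_zero]
end

section
/- Let N0 > 0, τ > 0, c ≥ 0, and P_0, …, P_L ≥ 0 be real numbers, and let R_0, …, R_L and R_E be n × n complex Hermitian positive semidefinite matrices with Σ_{t=0}^{L} tr(R_t R_E) = 0. Then for every index l ∈ {0, …, L}, the matrices N0·I + τ Σ_{t=0}^{L} P_t R_t + τ c R_E and N0·I + τ Σ_{t=0}^{L} P_t R_t are invertible and R_l (N0·I + τ Σ_{t=0}^{L} P_t R_t + τ c R_E)^{-1} R_l = R_l (N0·I + τ Σ_{t=0}^{L} P_t R_t)^{-1} R_l. -/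
/-!
Write `R_t = Cᴴ C` and `R_E = Dᴴ D`. Then `tr(R_t R_E) = ‖C Dᴴ‖²_F ≥ 0`, so the vanishing of
`∑_t tr(R_t R_E)` forces every product `R_t R_E` (and, taking adjoints, `R_E R_t`) to vanish.
Hence `R_E` annihilates `S = ∑_t P_t R_t`, so `R_E A = N0 R_E` for `A = N0 I + τ S` and
`R_E A⁻¹ R_l = N0⁻¹ R_E R_l = 0`. Therefore `(A + τ c R_E) (A⁻¹ R_l) = R_l`, that is,
`(A + τ c R_E)⁻¹ R_l = A⁻¹ R_l`.
-/

open Matrix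
open scoped ComplexOrder

namespace Matrix

section Inverse

variable {n K : Type*} [Fintype n] [DecidableEq n]

lemma mul_inv_eq_smul_of_mul_eq_smul [Field K] {E A : Matrix n n K} {a : K} (ha : a ≠ 0)
    (hA : IsUnit A) (h : E * A = a • E) : E * A⁻¹ = a⁻¹ • E := by
  calc E * A⁻¹ = a⁻¹ • (a • E) * A⁻¹ := by rw [smul_smul, inv_mul_cancel₀ ha, one_smul]
    _ = a⁻¹ • E := by
      rw [← h, smul_mul, Matrix.mul_assoc, mul_nonsing_inv _ ((isUnit_iff_isUnit_det A).mp hA),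
        Matrix.mul_one]

lemma add_inv_mul_eq_inv_mul [CommRing K] {A E X : Matrix n n K} (hA : IsUnit A)
    (hAE : IsUnit (A + E)) (h : E * A⁻¹ * X = 0) : (A + E)⁻¹ * X = A⁻¹ * X := by
  have hright : (A + E) * (A⁻¹ * X) = X := by
    rw [Matrix.add_mul, ← Matrix.mul_assoc, mul_nonsing_inv _ ((isUnit_iff_isUnit_det A).mp hA),
      Matrix.one_mul, ← Matrix.mul_assoc, h, add_zero]
  calc (A + E)⁻¹ * X = (A + E)⁻¹ * ((A + E) * (A⁻¹ * X)) := by rw [hright]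
    _ = A⁻¹ * X := by
      rw [← Matrix.mul_assoc, nonsing_inv_mul _ ((isUnit_iff_isUnit_det _).mp hAE), Matrix.one_mul]

end Inverse

section TraceOfProduct

variable {n 𝕜 : Type*} [Fintype n] [RCLike 𝕜]

lemma trace_conjTranspose_mul_self_mul_conjTranspose_mul_self (C D : Matrix n n 𝕜) :
    (Cᴴ * C * (Dᴴ * D)).trace = ((C * Dᴴ)ᴴ * (C * Dᴴ)).trace := by
  rw [conjTranspose_mul, conjTranspose_conjTranspose, ← Matrix.mul_assoc, trace_mul_cycle,
    ← Matrix.mul_assoc, ← Matrix.mul_assoc]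

lemma PosSemidef.exists_eq_conjTranspose_mul_self {A : Matrix n n 𝕜} (hA : A.PosSemidef) :
    ∃ C : Matrix n n 𝕜, A = Cᴴ * C := by
  classical
  open scoped MatrixOrder in exact CStarAlgebra.nonneg_iff_eq_star_mul_self.mp hA.nonneg

variable {A B : Matrix n n 𝕜}

lemma PosSemidef.trace_mul_nonneg (hA : A.PosSemidef) (hB : B.PosSemidef) :
    0 ≤ (A * B).trace := by
  obtain ⟨C, rfl⟩ := hA.exists_eq_conjTranspose_mul_self
  obtain ⟨D, rfl⟩ := hB.exists_eq_conjTranspose_mul_self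
  rw [trace_conjTranspose_mul_self_mul_conjTranspose_mul_self]
  exact (posSemidef_conjTranspose_mul_self _).trace_nonneg

lemma PosSemidef.trace_mul_eq_zero_iff (hA : A.PosSemidef) (hB : B.PosSemidef) :
    (A * B).trace = 0 ↔ A * B = 0 := by
  refine ⟨fun h ↦ ?_, fun h ↦ h ▸ trace_zero n 𝕜⟩
  obtain ⟨C, rfl⟩ := hA.exists_eq_conjTranspose_mul_self
  obtain ⟨D, rfl⟩ := hB.exists_eq_conjTranspose_mul_self
  rw [trace_conjTranspose_mul_self_mul_conjTranspose_mul_self,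
    trace_conjTranspose_mul_self_eq_zero_iff] at h
  rw [Matrix.mul_assoc, ← Matrix.mul_assoc C, h, Matrix.zero_mul, Matrix.mul_zero]

lemma PosSemidef.mul_eq_zero_of_sum_trace_mul_eq_zero {ι : Type*} {s : Finset ι}
    {R : ι → Matrix n n 𝕜} (hR : ∀ i ∈ s, (R i).PosSemidef) (hB : B.PosSemidef)
    (h : ∑ i ∈ s, (R i * B).trace = 0) : ∀ i ∈ s, R i * B = 0 := fun i hi ↦
  ((hR i hi).trace_mul_eq_zero_iff hB).mp <|
    (Finset.sum_eq_zero_iff_of_nonneg fun j hj ↦ (hR j hj).trace_mul_nonneg hB).mp h i hi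

end TraceOfProduct

end Matrix

/-- Central matrix identity (Eq. (82)) behind Theorem 3 of the paper: under the
statistical orthogonality condition `∑_t tr(R_t R_E) = 0`, the MMSE estimate covariance
with eavesdropper pilot contamination equals the contamination-free one. -/
theorem stmt_14 {n L : ℕ} (N0 τ c : ℝ) (hN0 : 0 < N0) (hτ : 0 < τ) (hc : 0 ≤ c)
    (P : Fin (L + 1) → ℝ) (hP : ∀ t, 0 ≤ P t)
    (R : Fin (L + 1) → Matrix (Fin n) (Fin n) ℂ)
    (RE : Matrix (Fin n) (Fin n) ℂ)
    (hR : ∀ t, (R t).PosSemidef) (hRE : RE.PosSemidef)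
    (horth : (∑ t, Matrix.trace (R t * RE)) = 0) (l : Fin (L + 1)) :
    IsUnit ((N0 : ℂ) • (1 : Matrix (Fin n) (Fin n) ℂ)
        + (τ : ℂ) • (∑ t, (P t : ℂ) • R t) + ((τ * c : ℝ) : ℂ) • RE) ∧
    IsUnit ((N0 : ℂ) • (1 : Matrix (Fin n) (Fin n) ℂ)
        + (τ : ℂ) • (∑ t, (P t : ℂ) • R t)) ∧
    R l * ((N0 : ℂ) • (1 : Matrix (Fin n) (Fin n) ℂ)
        + (τ : ℂ) • (∑ t, (P t : ℂ) • R t) + ((τ * c : ℝ) : ℂ) • RE)⁻¹ * R l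
      = R l * ((N0 : ℂ) • (1 : Matrix (Fin n) (Fin n) ℂ)
        + (τ : ℂ) • (∑ t, (P t : ℂ) • R t))⁻¹ * R l := by
  set S := ∑ t, (P t : ℂ) • R t
  set A := (N0 : ℂ) • (1 : Matrix (Fin n) (Fin n) ℂ) + (τ : ℂ) • S
  have hRRE : ∀ t, R t * RE = 0 := fun t ↦
    PosSemidef.mul_eq_zero_of_sum_trace_mul_eq_zero (fun t _ ↦ hR t) hRE horth t
      (Finset.mem_univ t)
  have hRER : ∀ t, RE * R t = 0 := fun t ↦ by
    simpa [(hR t).1.eq, hRE.1.eq] using congrArg conjTranspose (hRRE t)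
  have hRES : RE * S = 0 := by simp [S, Finset.mul_sum, hRER]
  have hSpsd : S.PosSemidef :=
    posSemidef_sum _ fun t _ ↦ (hR t).smul (Complex.zero_le_real.mpr (hP t))
  have hA : A.PosDef := (PosDef.one.smul (Complex.zero_lt_real.mpr hN0)).add_posSemidef
    (hSpsd.smul (Complex.zero_le_real.mpr hτ.le))
  have hB : (A + ((τ * c : ℝ) : ℂ) • RE).PosDef :=
    hA.add_posSemidef (hRE.smul (Complex.zero_le_real.mpr (mul_nonneg hτ.le hc)))
  have hREA : RE * A⁻¹ = (N0 : ℂ)⁻¹ • RE :=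
    mul_inv_eq_smul_of_mul_eq_smul (by exact_mod_cast hN0.ne') hA.isUnit
      (by simp [A, Matrix.mul_add, hRES])
  refine ⟨hB.isUnit, hA.isUnit, ?_⟩
  rw [Matrix.mul_assoc, add_inv_mul_eq_inv_mul hA.isUnit hB.isUnit
    (by rw [smul_mul, smul_mul, hREA, smul_mul, hRER, smul_zero, smul_zero]), ← Matrix.mul_assoc]
end

section
/- Let β01, βE, P01, PE, τ, N0 > 0 be fixed real numbers and D = N0 + τ(P01 β01 + PE βE). For each positive integer N_t define T = τ P01 β01² N_t / D, B = τ P01 β01³ (N0 + τ PE βE) N_t / D², C = β01 (N0 + τ PE βE) N_t / D, E = βE N_t, Λ = τ P01 β01² βE N_t (τ P01 β01 + τ PE βE N_t + N0) / D², and η1(N_t) = (T² + B)(E·T − Λ) − (B + T·C)·Λ. If P01 β01 > PE βE, then there exists N₀ such that η1(N_t) > 0 for all N_t ≥ N₀; if P01 β01 < PE βE, then there exists N₀ such that η1(N_t) < 0 for all N_t ≥ N₀. -/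
/-!
After clearing the denominator `D⁴`, `η1(N_t) = k N_t² (a N_t² - b N_t - c)` with `k > 0`
and leading coefficient `a = τ (P01 β01 - PE βE) D`, so for large `N_t` the sign of `η1(N_t)` is
the sign of `P01 β01 - PE βE`.
-/

open Filter

lemma eventually_pos_mul_sq_mul_quadratic {k a : ℝ} (hk : 0 < k) (ha : 0 < a) (b c : ℝ) :
    ∀ᶠ n : ℕ in atTop, 0 < k * (n : ℝ) ^ 2 * (a * (n : ℝ) ^ 2 - b * n - c) := by
  have hquad : Tendsto (fun x : ℝ => a * x ^ 2 - b * x - c) atTop atTop := by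
    have hlin : Tendsto (fun x : ℝ => a * x - b) atTop atTop :=
      tendsto_atTop_add_const_right _ (-b) (tendsto_id.const_mul_atTop ha)
    refine tendsto_atTop_add_const_right _ (-c) ((tendsto_id.atTop_mul_atTop₀ hlin).congr fun x => ?_)
    simp only [id]
    ring
  filter_upwards [(hquad.comp tendsto_natCast_atTop_atTop).eventually_gt_atTop 0,
    eventually_ge_atTop 1] with n hpos hn
  have hn : (0 : ℝ) < n := Nat.cast_pos.mpr hn
  exact mul_pos (by positivity) hpos

lemma eventually_neg_mul_sq_mul_quadratic {k a : ℝ} (hk : 0 < k) (ha : a < 0) (b c : ℝ) :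
    ∀ᶠ n : ℕ in atTop, k * (n : ℝ) ^ 2 * (a * (n : ℝ) ^ 2 - b * n - c) < 0 := by
  filter_upwards [eventually_pos_mul_sq_mul_quadratic hk (neg_pos.mpr ha) (-b) (-c)] with n hn
  linarith

lemma secrecy_coeff_eq {β01 βE P01 PE τ N0 D : ℝ} (hD : D = N0 + τ * (P01 * β01 + PE * βE))
    (hD0 : D ≠ 0) (x : ℝ) :
    ((τ * P01 * β01 ^ 2 * x / D) ^ 2 + τ * P01 * β01 ^ 3 * (N0 + τ * PE * βE) * x / D ^ 2) *
        (βE * x * (τ * P01 * β01 ^ 2 * x / D)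
          - τ * P01 * β01 ^ 2 * βE * x * (τ * P01 * β01 + τ * PE * βE * x + N0) / D ^ 2)
      - (τ * P01 * β01 ^ 3 * (N0 + τ * PE * βE) * x / D ^ 2
          + τ * P01 * β01 ^ 2 * x / D * (β01 * (N0 + τ * PE * βE) * x / D))
        * (τ * P01 * β01 ^ 2 * βE * x * (τ * P01 * β01 + τ * PE * βE * x + N0) / D ^ 2)
      = τ ^ 2 * P01 ^ 2 * β01 ^ 5 * βE / D ^ 4 * x ^ 2 *
        (τ * (P01 * β01 - PE * βE) * D * x ^ 2
          - ((τ * P01 * β01) * N0 + (τ * P01 * β01) ^ 2 + (N0 + τ * PE * βE) * (τ * PE * βE)) * x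
          - 2 * (N0 + τ * PE * βE) * (N0 + τ * P01 * β01)) := by
  field_simp
  rw [hD]
  ring

/-- Theorem 8 of the paper: in the i.i.d. fading case, for large numbers of transmit
antennas `N_t`, the secrecy coefficient `η1(N_t)` is eventually positive when
`P01 β01 > PE βE` and eventually negative when `P01 β01 < PE βE`. -/
theorem stmt_19 (β01 βE P01 PE τ N0 : ℝ)
    (hβ01 : 0 < β01) (hβE : 0 < βE) (hP01 : 0 < P01) (hPE : 0 < PE)
    (hτ : 0 < τ) (hN0 : 0 < N0)
    (D : ℝ) (hD : D = N0 + τ * (P01 * β01 + PE * βE))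
    (T B C E Λ η1 : ℕ → ℝ)
    (hT : ∀ Nt : ℕ, T Nt = τ * P01 * β01 ^ 2 * Nt / D)
    (hB : ∀ Nt : ℕ, B Nt = τ * P01 * β01 ^ 3 * (N0 + τ * PE * βE) * Nt / D ^ 2)
    (hC : ∀ Nt : ℕ, C Nt = β01 * (N0 + τ * PE * βE) * Nt / D)
    (hE : ∀ Nt : ℕ, E Nt = βE * Nt)
    (hΛ : ∀ Nt : ℕ, Λ Nt
      = τ * P01 * β01 ^ 2 * βE * Nt * (τ * P01 * β01 + τ * PE * βE * Nt + N0) / D ^ 2)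
    (hη : ∀ Nt : ℕ, η1 Nt
      = (T Nt ^ 2 + B Nt) * (E Nt * T Nt - Λ Nt) - (B Nt + T Nt * C Nt) * Λ Nt) :
    (P01 * β01 > PE * βE → ∃ N₀ : ℕ, ∀ Nt : ℕ, N₀ ≤ Nt → 0 < η1 Nt) ∧
    (P01 * β01 < PE * βE → ∃ N₀ : ℕ, ∀ Nt : ℕ, N₀ ≤ Nt → η1 Nt < 0) := by
  have hDpos : 0 < D := by rw [hD]; positivity
  have hk : 0 < τ ^ 2 * P01 ^ 2 * β01 ^ 5 * βE / D ^ 4 := by positivity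
  simp only [hη, hT, hB, hC, hE, hΛ, secrecy_coeff_eq hD hDpos.ne', ← eventually_atTop]
  constructor
  · intro hgt
    have ha : 0 < τ * (P01 * β01 - PE * βE) * D := by
      have : 0 < P01 * β01 - PE * βE := sub_pos.mpr hgt
      positivity
    exact eventually_pos_mul_sq_mul_quadratic hk ha _ _
  · intro hlt
    have ha : τ * (P01 * β01 - PE * βE) * D < 0 :=
      mul_neg_of_neg_of_pos (mul_neg_of_pos_of_neg hτ (sub_neg.mpr hlt)) hDpos
    exact eventually_neg_mul_sq_mul_quadratic hk ha _ _
end
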